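/- For the Freund manifold metric, the α-Ricci tensor has 0 as an eigenvalue with eigenvector (α₁/α₂, 0, 1, 0), for every α ∈ ℝ. -/
import Mathlib


open Real

/-- The Fisher information metric of the Freund manifold in coordinates
`(α₁, β₁, α₂, β₂)`. -/
noncomputable def met (a1 b1 a2 b2 : ℝ) : Matrix (Fin 4) (Fin 4) ℝ :=
  Matrix.diagonal
    ![1 / (a1 ^ 2 + a1 * a2),
      a2 / (b1 ^ 2 * (a1 + a2)),
      1 / (a2 ^ 2 + a1 * a2),
      a1 / (b2 ^ 2 * (a1 + a2))]

/-- The α-Ricci tensor of the Freund manifold. -/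
noncomputable def ricci (al a1 b1 a2 b2 : ℝ) : Matrix (Fin 4) (Fin 4) ℝ :=
  !![-(al ^ 2 - 1) * a2 / (2 * a1 * (a1 + a2) ^ 2), 0,
        (al ^ 2 - 1) / (2 * (a1 + a2) ^ 2), 0;
     0, -(al ^ 2 - 1) * a2 / (2 * (a1 + a2) * b1 ^ 2), 0, 0;
     (al ^ 2 - 1) / (2 * (a1 + a2) ^ 2), 0,
        -(al ^ 2 - 1) * a1 / (2 * a2 * (a1 + a2) ^ 2), 0;
     0, 0, 0, -(al ^ 2 - 1) * a1 / (2 * (a1 + a2) * b2 ^ 2)]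

/-- `(α₁/α₂, 0, 1, 0)` is an eigenvector of the α-Ricci tensor (relative to the
Fisher metric `g`, i.e. `Ric·v = λ g·v`) with eigenvalue `0`, for every `α`. -/
theorem freund_ricci_zero_eigenvalue (al a1 b1 a2 b2 : ℝ)
    (ha1 : 0 < a1) (hb1 : 0 < b1) (ha2 : 0 < a2) (hb2 : 0 < b2) :
    (ricci al a1 b1 a2 b2).mulVec ![a1 / a2, 0, 1, 0] =
      (0 : ℝ) • (met a1 b1 a2 b2).mulVec ![a1 / a2, 0, 1, 0] := by
  have h1 : a1 ≠ 0 := ha1.ne'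
  have h2 : a2 ≠ 0 := ha2.ne'
  have h12 : a1 + a2 ≠ 0 := by positivity
  funext i
  fin_cases i <;>
    simp [ricci, met, Matrix.mulVec, dotProduct, Fin.sum_univ_four] <;>
    field_simp <;> ring
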